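/- arXiv:1904.05786 — 5 statements merged into one kernel-verified Lean document; each statement's English description precedes it below -/
import Mathlib

section
/- In the Hopf superalgebra H_n (n≥1), the element ι = (1/n)(1+K+⋯+K^{n-1})X is a two-sided cointegral: xι = ε(x)ι and ιx = ε(x)ι for all x ∈ H_n. -/
/-!
STATEMENT 2.  In the Hopf superalgebra `H_n` (`n ≥ 1`), the element
`ι = (1/n)(1 + K + ⋯ + Kⁿ⁻¹)X` is a two-sided cointegral: `x·ι = ε(x)·ι` and
`ι·x = ε(x)·ι` for all `x ∈ H_n`.  (`k` has characteristic zero, so `1/n` makes sense.)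
-/

/-- Basis index of `H_n`: `(i, ε)` encodes the basis element `Kⁱ Xᵉ` (with `|Kⁱ| = 0`,
`|KⁱX| = 1`). -/
abbrev HnIdx (n : ℕ) := ZMod n × Bool

/-- `H_n` as the vector space of coefficient functions on its basis. -/
abbrev Hn (k : Type) (n : ℕ) := HnIdx n → k

/-- The tensor square `H_n ⊗ H_n`, as coefficient functions on pairs of basis vectors. -/
abbrev HnT (k : Type) (n : ℕ) := HnIdx n × HnIdx n → k

variable {k : Type} [Field k] {n : ℕ}

namespace Hn

/-- Multiplication of `H_n`: determined by `Kⁱ·Kʲ = Kⁱ⁺ʲ`, `XK = KX`, `X² = 0`, `Kⁿ = 1`. -/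
noncomputable def mul [NeZero n] (f g : Hn k n) : Hn k n := fun p =>
  (∑ j : ZMod n, f (j, false) * g (p.1 - j, p.2)) +
    (if p.2 = true then ∑ j : ZMod n, f (j, true) * g (p.1 - j, false) else 0)

/-- The unit `1 = K⁰`. -/
noncomputable def one : Hn k n := fun p => if p = ((0 : ZMod n), false) then 1 else 0

/-- The counit: `ε(Kⁱ) = 1`, `ε(KⁱX) = 0`. -/
noncomputable def counit [NeZero n] (f : Hn k n) : k := ∑ j : ZMod n, f (j, false)

/-- The coproduct: `Δ(Kⁱ) = Kⁱ ⊗ Kⁱ` and `Δ(KⁱX) = Kⁱ⁺¹ ⊗ KⁱX + KⁱX ⊗ Kⁱ`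
(extending `Δ(X) = K ⊗ X + X ⊗ 1` as a superalgebra morphism). -/
noncomputable def comul (f : Hn k n) : HnT k n := fun q =>
  match q with
  | ((a, false), (b, false)) => if a = b then f (a, false) else 0
  | ((a, false), (b, true)) => if a = b + 1 then f (b, true) else 0
  | ((a, true), (b, false)) => if a = b then f (a, true) else 0
  | ((_, true), (_, true)) => 0

/-- The antipode: `S(Kⁱ) = K⁻ⁱ`, `S(KⁱX) = -K⁻ⁱ⁻¹X` (from `S(X) = -K⁻¹X`, `S(K) = K⁻¹`). -/
noncomputable def antipode (f : Hn k n) : Hn k n := fun p =>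
  match p with
  | (i, false) => f (-i, false)
  | (i, true) => -f (-i - 1, true)

/-- Multiplication on the tensor square `H_n ⊗ H_n` with the Koszul sign rule. -/
noncomputable def tmul [NeZero n] (F G : HnT k n) : HnT k n := fun q =>
  ∑ x : HnIdx n × HnIdx n, ∑ y : HnIdx n × HnIdx n,
    if x.1.1 + y.1.1 = q.1.1 ∧ x.2.1 + y.2.1 = q.2.1 ∧
        ¬(x.1.2 = true ∧ y.1.2 = true) ∧ ¬(x.2.2 = true ∧ y.2.2 = true) ∧
        (x.1.2 || y.1.2) = q.1.2 ∧ (x.2.2 || y.2.2) = q.2.2 then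
      (if x.2.2 = true ∧ y.1.2 = true then (-1 : k) else 1) * F x * G y
    else 0

/-- The element `X ∈ H_n`. -/
noncomputable def Xel : Hn k n := fun p => if p = ((0 : ZMod n), true) then 1 else 0

/-- The element `K ∈ H_n`. -/
noncomputable def Kel : Hn k n := fun p => if p = ((1 : ZMod n), false) then 1 else 0

/-- The element `K⁻¹ ∈ H_n`. -/
noncomputable def KelInv : Hn k n := fun p => if p = ((-1 : ZMod n), false) then 1 else 0

/-- The two-sided cointegral `ι = (1/n)(1 + K + ⋯ + Kⁿ⁻¹)X` of `H_n`. -/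
noncomputable def iota : Hn k n := fun p => if p.2 = true then (n : k)⁻¹ else 0

/-- The (Hopf super-)subalgebra `B = k⟨K^±1 | Kⁿ = 1⟩` of `H_n`, on the basis `{Kⁱ}`. -/
abbrev Bsub (k : Type) (n : ℕ) := ZMod n → k

/-- Multiplication of `B` (convolution on `ℤ/n`). -/
noncomputable def bmul [NeZero n] (b b' : Bsub k n) : Bsub k n := fun i =>
  ∑ j : ZMod n, b j * b' (i - j)

/-- The unit of `B`. -/
noncomputable def bone : Bsub k n := fun i => if i = 0 then 1 else 0

/-- The counit of `B`: `ε_B(Kⁱ) = 1`. -/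
noncomputable def bcounit [NeZero n] (b : Bsub k n) : k := ∑ i : ZMod n, b i

/-- The antipode of `B`: `S_B(Kⁱ) = K⁻ⁱ`. -/
noncomputable def bantipode (b : Bsub k n) : Bsub k n := fun i => b (-i)

/-- The inclusion `i_B : B → H_n`. -/
noncomputable def iB (b : Bsub k n) : Hn k n := fun p => if p.2 = true then 0 else b p.1

/-- The Hopf projection `π_B : H_n → B`, killing `X`. -/
noncomputable def piB (f : Hn k n) : Bsub k n := fun i => f (i, false)

/-- The relative right integral `μ = μ_Λ ⊗ id_B : H_n → B`:
`μ(Kⁱ) = 0`, `μ(KⁱX) = Kⁱ`. -/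
noncomputable def mu (f : Hn k n) : Bsub k n := fun i => f (i, true)

end Hn

/-
`ι` has zero even part and constant odd part, so `Kʲ·ι = ι·Kʲ = ι` while `KʲX·ι = ι·KʲX = 0`
by `X² = 0`; hence `x·ι` and `ι·x` see only the even coefficients of `x`, whose sum is `ε(x)`.
-/

namespace Hn

variable [NeZero n]

lemma mul_apply_even (f g : Hn k n) (i : ZMod n) :
    mul f g (i, false) = ∑ j : ZMod n, f (j, false) * g (i - j, false) := by
  simp [mul]

lemma mul_apply_odd (f g : Hn k n) (i : ZMod n) :
    mul f g (i, true) = ∑ j : ZMod n, f (j, false) * g (i - j, true) +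
      ∑ j : ZMod n, f (j, true) * g (i - j, false) := by
  simp [mul]

lemma counit_eq_sum_sub (f : Hn k n) (i : ZMod n) :
    counit f = ∑ j : ZMod n, f (i - j, false) :=
  (Fintype.sum_equiv (Equiv.subLeft i) _ _ fun _ => rfl).symm

lemma mul_iota (x : Hn k n) : mul x iota = counit x • iota := by
  funext ⟨i, b⟩
  cases b
  · simp [mul_apply_even, iota]
  · simp [mul_apply_odd, iota, counit, Finset.sum_mul]

lemma iota_mul (x : Hn k n) : mul iota x = counit x • iota := by
  funext ⟨i, b⟩
  cases b
  · simp [mul_apply_even, iota]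
  · simp [mul_apply_odd, iota, counit_eq_sum_sub x i, Finset.mul_sum, mul_comm]

end Hn

open Hn in
theorem statement_2_general {k : Type} [Field k] {n : ℕ} [NeZero n] (x : Hn k n) :
    mul x iota = counit x • iota ∧ mul iota x = counit x • iota :=
  ⟨mul_iota x, iota_mul x⟩

open Hn in
/-- `ι = (1/n)(1 + K + ⋯ + Kⁿ⁻¹)X ∈ H_n` is a two-sided cointegral. -/
theorem statement_2 {k : Type} [Field k] [CharZero k] {n : ℕ} [NeZero n] (x : Hn k n) :
    mul x iota = counit x • iota ∧ mul iota x = counit x • iota :=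
  statement_2_general x
end

section
/- In H_n (n≥1), let B be the subalgebra generated by K^{±1}, so H_n ≅ Λ_k ⊗ B as superalgebras. The map μ : H_n → B defined by μ(K^i)=0 and μ(K^iX)=K^i for all i is B-linear (μ(bx)=bμ(x) for b∈B) and satisfies the relative right integral identity (μ ⊗ id)∘Δ = i_B ∘ μ, where i_B : B → H_n is the inclusion. -/
variable {k : Type} [Field k] {n : ℕ}

namespace Hn

@[simp]
theorem iB_apply_true (b : Bsub k n) (i : ZMod n) : iB b (i, true) = 0 := rfl

@[simp]
theorem iB_apply_false (b : Bsub k n) (i : ZMod n) : iB b (i, false) = b i := rfl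

theorem mu_mul_iB [NeZero n] (b : Bsub k n) (x : Hn k n) :
    mu (mul (iB b) x) = bmul b (mu x) := by
  funext i
  simp only [mu, mul, bmul, iB_apply_false, iB_apply_true, zero_mul, Finset.sum_const_zero,
    if_true, add_zero]

/-- Only `Δ(KⁱX) = Kⁱ⁺¹ ⊗ KⁱX + KⁱX ⊗ Kⁱ` has an odd first leg, and that leg `KⁱX` is paired
with `Kⁱ`. -/
theorem comul_apply_true_left (f : Hn k n) (i : ZMod n) (x : HnIdx n) :
    comul f ((i, true), x) = if x.2 = false ∧ x.1 = i then mu f i else 0 := by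
  obtain ⟨j, _ | _⟩ := x <;> simp [comul, mu, eq_comm]

end Hn

open Hn in
/-- `μ : H_n → B` (`μ(Kⁱ) = 0`, `μ(KⁱX) = Kⁱ`) is `B`-linear and satisfies the
relative right integral identity: applying `μ` to the first leg of `Δ_H(f)` gives
`Δ_B(μ(f))` with the second leg included via `i_B`. -/
theorem statement_3 {k : Type} [Field k] {n : ℕ} [NeZero n] :
    -- B-linearity: `μ(b·x) = b·μ(x)` for `b ∈ B`
    (∀ (b : Bsub k n) (x : Hn k n), mu (mul (iB b) x) = bmul b (mu x)) ∧
    -- relative integral identity `(μ ⊗ id_H) ∘ Δ_H = (id_B ⊗ i_B) ∘ Δ_B ∘ μ`, written on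
    -- coefficients: the `(Kⁱ ⊗ basis x)`-coefficient of `(μ ⊗ id)(Δ f)` is the
    -- corresponding coefficient of `(id_B ⊗ i_B)(Δ_B (μ f))`.
    (∀ (f : Hn k n) (i : ZMod n) (x : HnIdx n),
      comul f ((i, true), x) = if x.2 = false ∧ x.1 = i then mu f i else 0) :=
  ⟨mu_mul_iB, comul_apply_true_left⟩
end

section
/- In H_n (n≥1), the integral μ (with μ(K^i)=0, μ(K^iX)=K^i) satisfies μ(Kx) = (-1)^{|μ|} S_B(μ(S(x))) for all homogeneous x ∈ H_n; i.e. the distinguished group-like for μ is b = K. -/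
variable {k : Type} [Field k] {n : ℕ}

/- Both sides read off the coefficient of `Kⁱ⁻¹X` in `x`: left multiplication by `K` shifts the
`K`-degree by one, while `S(KʲX) = -K⁻ʲ⁻¹X` and `S_B` undoes the inversion `j ↦ -j`, leaving the
sign `-1 = (-1)^{|μ|}`. -/

namespace Hn

theorem mu_antipode_apply (x : Hn k n) (i : ZMod n) : mu (antipode x) i = -x (-i - 1, true) :=
  rfl

variable [NeZero n]

theorem mul_Kel_apply (x : Hn k n) (p : HnIdx n) : mul Kel x p = x (p.1 - 1, p.2) := by
  rw [mul, Finset.sum_eq_single (1 : ZMod n) (fun j _ hj => by simp [Kel, hj]) (by simp)]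
  simp [Kel]

theorem mu_mul_Kel_apply (x : Hn k n) (i : ZMod n) : mu (mul Kel x) i = x (i - 1, true) :=
  mul_Kel_apply x (i, true)

end Hn

open Hn in
/-- `μ(K·x) = (-1)^{|μ|} S_B(μ(S(x)))` with `|μ| = 1`; the distinguished
group-like of `μ` is `b = K`. -/
theorem statement_4 {k : Type} [Field k] {n : ℕ} [NeZero n] (x : Hn k n) :
    mu (mul Kel x) = ((-1 : k) ^ (1 : ℕ)) • bantipode (mu (antipode x)) := by
  funext i
  simp only [mu_mul_Kel_apply, Pi.smul_apply, bantipode, mu_antipode_apply, neg_neg, pow_one,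
    smul_eq_mul, neg_one_mul]
end

section
/- In H_n (n≥1), the two-sided cointegral ι = (1/n)(Σ_{i=0}^{n-1} K^i)X satisfies the cotrace identity: ι_{(2)} ⊗ ι_{(1)} = (1 ⊗ K)·(ι_{(1)} ⊗ ι_{(2)}), where Δ(ι) = Σ ι_{(1)} ⊗ ι_{(2)}. -/
variable {k : Type} [Field k] {n : ℕ}

namespace Hn

/-- The super flip `τ` on `H_n ⊗ H_n` (Koszul sign convention). -/
noncomputable def flipT (F : HnT k n) : HnT k n := fun q =>
  (if q.1.2 = true ∧ q.2.2 = true then (-1 : k) else 1) * F (q.2, q.1)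

/-- The element `1 ⊗ K ∈ H_n ⊗ H_n`. -/
noncomputable def oneTensorK : HnT k n := fun q =>
  if q = (((0 : ZMod n), false), ((1 : ZMod n), false)) then 1 else 0

end Hn

/-!
Both sides equal `(1/n) Σᵢ (KⁱX ⊗ Kⁱ⁺¹ + Kⁱ ⊗ KⁱX)`: the flip of
`Δ(ι) = (1/n) Σᵢ (Kⁱ⁺¹ ⊗ KⁱX + KⁱX ⊗ Kⁱ)` carries no sign since no term has two odd factors,
and left multiplication by `1 ⊗ K` only shifts the exponent of the second factor, which is
absorbed by reindexing the sum over `ℤ/n`.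
-/

namespace Hn

variable [NeZero n]

theorem tmul_oneTensorK_apply (G : HnT k n) (q : HnIdx n × HnIdx n) :
    tmul oneTensorK G q = G (q.1, (q.2.1 - 1, q.2.2)) := by
  obtain ⟨⟨a, ea⟩, ⟨b, eb⟩⟩ := q
  unfold tmul
  rw [Fintype.sum_eq_single (((0 : ZMod n), false), ((1 : ZMod n), false)) fun x hx =>
      Finset.sum_eq_zero fun y _ => by simp [oneTensorK, hx],
    Fintype.sum_eq_single ((a, ea), (b - 1, eb)) fun y hy => if_neg ?_]
  · cases ea <;> cases eb <;> simp [oneTensorK]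
  · rintro ⟨h1, h2, -, -, h5, h6⟩
    obtain ⟨⟨c, ec⟩, ⟨d, ed⟩⟩ := y
    simp only [zero_add, Bool.false_or] at h1 h2 h5 h6
    subst h1 h5 h6
    exact hy (by rw [← h2, add_sub_cancel_left])

end Hn

open Hn in
theorem statement_5_general {k : Type} [Field k] {n : ℕ} [NeZero n] :
    flipT (comul (iota : Hn k n)) = tmul oneTensorK (comul iota) := by
  funext ⟨⟨a, ea⟩, ⟨b, eb⟩⟩
  rw [tmul_oneTensorK_apply]
  cases ea <;> cases eb <;>
    simp [flipT, comul, iota, eq_sub_iff_add_eq, eq_comm]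

open Hn in
/-- the cotrace identity `ι₍₂₎ ⊗ ι₍₁₎ = (1 ⊗ K)·(ι₍₁₎ ⊗ ι₍₂₎)` in
`H_n ⊗ H_n` (super flip, Koszul signs). -/
theorem statement_5 {k : Type} [Field k] [CharZero k] {n : ℕ} [NeZero n] :
    flipT (comul (iota : Hn k n)) = tmul oneTensorK (comul iota) :=
  statement_5_general
end

section
/- Compute: for the Hopf superalgebra H_n with ρ: a character sending K ↦ q (q an n-th root of unity), the Kuperberg-type contraction for the genus-2 Heegaard diagram of the left trefoil complement — pairing Δ^{(5)} of the cointegral X against μ along β₁ and π_B along β₂ with one antipode — evaluates to 1 - q + q², the Alexander polynomial of the trefoil up to a unit. Concretely: (ψ(β₁*)⊗ψ(β₂*))(μ(X)⊗1 + μ(K·S(X))⊗K + μ(K·K^{-1}·X)⊗K²) = 1 - q + q², where ψ(β₁*)=ε_B and ψ(β₂*)(K)=q. -/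
variable {k : Type} [Field k] {n : ℕ}

namespace Hn

/-- `1 = K⁰` as an element of `B`. -/
noncomputable def bOne : Bsub k n := fun i => if i = 0 then 1 else 0

/-- `K` as an element of `B`. -/
noncomputable def bK : Bsub k n := fun i => if i = 1 then 1 else 0

/-- `K²` as an element of `B`. -/
noncomputable def bK2 : Bsub k n := fun i => if i = 2 then 1 else 0

/-- The character `ψ(β₂*) : B → k` determined by `K ↦ q`. -/
noncomputable def psiQ [NeZero n] (q : k) (b : Bsub k n) : k := ∑ i : ZMod n, b i * q ^ i.val

end Hn
/-!
Left multiplication by `Kᵃ` shifts the `K`-exponent by `a`, so `K·K⁻¹·X = X` and, since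
`S(X) = -K⁻¹X`, `K·S(X) = -X`: the three `B`-components have `ε_B`-values `1, -1, 1`.
On the other side `ψ` sends `1, K, K²` to `1, q, q²`, because `qⁿ = 1` lets the exponent be read
modulo `n`.
-/

theorem pow_zmod_val_natCast {M : Type*} [Monoid M] {x : M} {n : ℕ} (hx : x ^ n = 1) (m : ℕ) :
    x ^ (m : ZMod n).val = x ^ m := by
  rw [ZMod.val_natCast, ← pow_eq_pow_mod m hx]

namespace Hn

variable {k : Type} [Field k] {n : ℕ} [NeZero n]

theorem mul_basis_left (a : ZMod n) (g : Hn k n) :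
    mul (fun p => if p = (a, false) then 1 else 0) g = fun p => g (p.1 - a, p.2) := by
  funext p
  simp [mul]

theorem mul_Kel (g : Hn k n) : mul Kel g = fun p => g (p.1 - 1, p.2) :=
  mul_basis_left 1 g

theorem mul_KelInv (g : Hn k n) : mul KelInv g = fun p => g (p.1 + 1, p.2) :=
  (mul_basis_left (-1) g).trans (funext fun p => by rw [sub_neg_eq_add])

theorem mul_Kel_mul_KelInv (g : Hn k n) : mul Kel (mul KelInv g) = g := by
  simp only [mul_Kel, mul_KelInv, sub_add_cancel]

theorem mul_Kel_antipode_Xel : mul Kel (antipode (Xel : Hn k n)) = -Xel := by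
  rw [mul_Kel]
  funext ⟨i, b⟩
  cases b <;> simp [Xel, antipode]

theorem bcounit_mu_neg (f : Hn k n) : bcounit (mu (-f)) = -bcounit (mu f) := by
  simp [bcounit, mu]

theorem bcounit_mu_Xel : bcounit (mu (Xel : Hn k n)) = 1 := by
  simp [bcounit, mu, Xel]

theorem psiQ_natCast_basis {q : k} (hq : q ^ n = 1) (m : ℕ) :
    psiQ q (fun i : ZMod n => if i = m then 1 else 0) = q ^ m := by
  simp only [psiQ, ite_mul, one_mul, zero_mul, Finset.sum_ite_eq', Finset.mem_univ, if_true]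
  exact pow_zmod_val_natCast hq m

theorem psiQ_bK {q : k} (hq : q ^ n = 1) : psiQ q (bK : Bsub k n) = q := by
  unfold bK
  simpa using psiQ_natCast_basis hq 1

theorem psiQ_bK2 {q : k} (hq : q ^ n = 1) : psiQ q (bK2 : Bsub k n) = q ^ 2 := by
  unfold bK2
  simpa using psiQ_natCast_basis hq 2

theorem psiQ_bOne (q : k) : psiQ q (bOne : Bsub k n) = 1 := by
  simp [psiQ, bOne]

end Hn

open Hn in
/-- the Kuperberg contraction for the left trefoil diagram computes to
`1 - q + q²`:
`ε_B(μ(X))·ψ(1) + ε_B(μ(K·S(X)))·ψ(K) + ε_B(μ(K·K⁻¹·X))·ψ(K²) = 1 - q + q²`. -/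
theorem statement_15 {k : Type} [Field k] {n : ℕ} [NeZero n] (q : k) (hq : q ^ n = 1) :
    bcounit (mu (Xel : Hn k n)) * psiQ q (bOne : Bsub k n)
      + bcounit (mu (mul Kel (antipode Xel) : Hn k n)) * psiQ q (bK : Bsub k n)
      + bcounit (mu (mul Kel (mul KelInv Xel) : Hn k n)) * psiQ q (bK2 : Bsub k n)
    = 1 - q + q ^ 2 := by
  rw [mul_Kel_mul_KelInv, mul_Kel_antipode_Xel, bcounit_mu_neg, bcounit_mu_Xel, psiQ_bOne,
    psiQ_bK hq, psiQ_bK2 hq]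
  ring
end
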